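/- Let G be a finite rooted DAG with root r, and let m ∈ ℕ. If G has the m-path property, then awt(G) ≤ amul(G) ≤ m · |V(G)|. -/

import Mathlib

/-!
Every path from `r` to `v ≠ r` extends a path to an in-neighbour `u` of `v`, so
`wt(v) ≤ ∑_{u → v} wt(u)`. Extending a path that realises `mul(u)` by the edge `u → v`
gives `mul(u) · deg⁻(v) ≤ mul(v)`, and as there are `deg⁻(v)` such `u`,
`∑_{u → v} mul(u) ≤ mul(v)`. Induction along the well-founded edge relation, starting from
`wt(r) = 1 ≤ mul(r)`, yields `wt ≤ mul` pointwise; summing gives `awt ≤ amul`, and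
`amul ≤ m · |V|` is the `m`-path property summed. Acyclicity makes paths duplicate-free lists,
hence finitely many, which is what makes the supremum defining `mul` attained (in `ℕ`, `sSup`
of an unbounded set is `0`).
-/

/-- The set of directed paths from `r` to `v` in the digraph with edge relation `E`,
represented as nonempty vertex lists. -/
def pathsFromTo {V : Type} (E : V → V → Prop) (r v : V) : Set (List V) :=
  {p : List V | p.Chain' E ∧ p.head? = some r ∧ p.getLast? = some v}

/-- The weight `wt_G(v)`: the number of directed paths from the root `r` to `v`. -/
noncomputable def pathWt {V : Type} (E : V → V → Prop) (r v : V) : ℕ :=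
  Set.ncard (pathsFromTo E r v)

/-- The in-degree of `w`. -/
noncomputable def degIn {V : Type} (E : V → V → Prop) (w : V) : ℕ :=
  Set.ncard {u | E u w}

/-- The multiplicity `mul_G(v)`: the maximum, over all paths `(v_0, …, v_k)` from the
root `r` to `v`, of the product `∏_{i=1}^k deg⁻(v_i)` (the empty product being `1`). -/
noncomputable def pathMul {V : Type} (E : V → V → Prop) (r v : V) : ℕ :=
  sSup {m | ∃ p ∈ pathsFromTo E r v, m = (p.tail.map (degIn E)).prod}

/-- The aggregate weight `awt(G) = Σ_{v ∈ V(G)} wt_G(v)`. -/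
noncomputable def awt {V : Type} [Fintype V] (E : V → V → Prop) (r : V) : ℕ :=
  ∑ v : V, pathWt E r v

/-- The aggregate multiplicity `amul(G) = Σ_{v ∈ V(G)} mul_G(v)`. -/
noncomputable def amul {V : Type} [Fintype V] (E : V → V → Prop) (r : V) : ℕ :=
  ∑ v : V, pathMul E r v

section

open Finset

variable {V : Type} {E : V → V → Prop} {r u v : V}

lemma List.IsChain.nodup_of_acyclic (hacyc : ∀ x : V, ¬ Relation.TransGen E x x)
    {p : List V} (hp : p.IsChain E) : p.Nodup :=
  have : Std.Irrefl (Relation.TransGen E) := ⟨hacyc⟩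
  (List.isChain_iff_pairwise.mp (hp.imp fun _ _ => Relation.TransGen.single)).nodup

lemma wellFounded_of_acyclic [Finite V] (hacyc : ∀ x : V, ¬ Relation.TransGen E x x) :
    WellFounded E :=
  have : Std.Irrefl (Relation.TransGen E) := ⟨hacyc⟩
  Subrelation.wf Relation.TransGen.single (Finite.wellFounded_of_trans_of_irrefl _)

lemma finite_pathsFromTo [Finite V] (hacyc : ∀ x : V, ¬ Relation.TransGen E x x) (r v : V) :
    (pathsFromTo E r v).Finite :=
  have := Fintype.ofFinite V
  (List.finite_length_le V (Fintype.card V)).subset fun _ hp =>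
    (hp.1.nodup_of_acyclic hacyc).length_le_card

lemma singleton_mem_pathsFromTo (r : V) : [r] ∈ pathsFromTo E r r :=
  ⟨.singleton r, rfl, rfl⟩

lemma append_singleton_mem_pathsFromTo {p : List V} (hp : p ∈ pathsFromTo E r u) (huv : E u v) :
    p ++ [v] ∈ pathsFromTo E r v := by
  obtain ⟨hc, hh, hl⟩ := hp
  refine ⟨List.isChain_append.mpr ⟨hc, .singleton _, ?_⟩, ?_, by simp⟩
  · simpa [hl] using huv
  · rwa [List.head?_append_of_ne_nil _ (by rintro rfl; simp at hh)]

lemma exists_mem_pathsFromTo (h : Relation.ReflTransGen E r v) :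
    ∃ p, p ∈ pathsFromTo E r v := by
  induction h with
  | refl => exact ⟨_, singleton_mem_pathsFromTo r⟩
  | tail _ huv ih =>
    obtain ⟨p, hp⟩ := ih
    exact ⟨_, append_singleton_mem_pathsFromTo hp huv⟩

lemma eq_singleton_or_exists_append_of_mem_pathsFromTo {p : List V}
    (hp : p ∈ pathsFromTo E r v) :
    p = [r] ∧ v = r ∨ ∃ u, E u v ∧ ∃ q ∈ pathsFromTo E r u, p = q ++ [v] := by
  obtain ⟨hc, hh, hl⟩ := hp
  rcases p.eq_nil_or_concat' with rfl | ⟨q, b, rfl⟩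
  · simp at hh
  obtain rfl : v = b := by simpa using hl.symm
  rcases q.eq_nil_or_concat' with rfl | ⟨q, u, rfl⟩
  · obtain rfl : v = r := by simpa using hh
    exact .inl ⟨rfl, rfl⟩
  obtain ⟨hq, -, huv⟩ := List.isChain_append.mp hc
  refine .inr ⟨u, by simpa using huv, q ++ [u], ⟨hq, ?_, by simp⟩, rfl⟩
  rwa [List.head?_append_of_ne_nil _ (by simp)] at hh

lemma pathsFromTo_eq_biUnion [Fintype V] [DecidableRel E] (hv : v ≠ r) :
    pathsFromTo E r v = ⋃ u ∈ ({u | E u v} : Finset V), (· ++ [v]) '' pathsFromTo E r u := by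
  refine subset_antisymm (fun p hp => ?_) (Set.iUnion₂_subset fun u hu => ?_)
  · rcases eq_singleton_or_exists_append_of_mem_pathsFromTo hp with
      ⟨-, rfl⟩ | ⟨u, huv, q, hq, rfl⟩
    · exact absurd rfl hv
    · exact Set.mem_biUnion (by simpa using huv) ⟨q, hq, rfl⟩
  · rintro _ ⟨q, hq, rfl⟩
    exact append_singleton_mem_pathsFromTo hq (by simpa using hu)

lemma pathsFromTo_self (hr : ∀ u, ¬ E u r) : pathsFromTo E r r = {[r]} := by
  refine Set.eq_singleton_iff_unique_mem.mpr ⟨singleton_mem_pathsFromTo r, fun p hp => ?_⟩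
  rcases eq_singleton_or_exists_append_of_mem_pathsFromTo hp with ⟨rfl, -⟩ | ⟨u, hur, -⟩
  · rfl
  · exact absurd hur (hr u)

lemma pathWt_le_sum_pathWt [Fintype V] [DecidableRel E] (hv : v ≠ r) :
    pathWt E r v ≤ ∑ u with E u v, pathWt E r u := by
  rw [pathWt, pathsFromTo_eq_biUnion hv]
  refine (set_ncard_biUnion_le _ _).trans_eq (sum_congr rfl fun u _ => ?_)
  exact Set.ncard_image_of_injective _ (List.append_left_injective [v])

lemma pathWt_self (hr : ∀ u, ¬ E u r) : pathWt E r r = 1 := by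
  rw [pathWt, pathsFromTo_self hr, Set.ncard_singleton]

lemma bddAbove_setOf_prod_degIn [Finite V] (hacyc : ∀ x : V, ¬ Relation.TransGen E x x)
    (r v : V) : BddAbove {m | ∃ p ∈ pathsFromTo E r v, m = (p.tail.map (degIn E)).prod} :=
  ((finite_pathsFromTo hacyc r v).image fun p => (p.tail.map (degIn E)).prod).bddAbove.mono
    (by rintro _ ⟨p, hp, rfl⟩; exact ⟨p, hp, rfl⟩)

lemma prod_degIn_le_pathMul [Finite V] (hacyc : ∀ x : V, ¬ Relation.TransGen E x x) {p : List V}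
    (hp : p ∈ pathsFromTo E r v) : (p.tail.map (degIn E)).prod ≤ pathMul E r v :=
  le_csSup (bddAbove_setOf_prod_degIn hacyc r v) ⟨p, hp, rfl⟩

lemma exists_prod_degIn_eq_pathMul [Finite V] (hacyc : ∀ x : V, ¬ Relation.TransGen E x x)
    (hv : Relation.ReflTransGen E r v) :
    ∃ p ∈ pathsFromTo E r v, (p.tail.map (degIn E)).prod = pathMul E r v := by
  obtain ⟨p, hp⟩ := exists_mem_pathsFromTo hv
  obtain ⟨q, hq, heq⟩ :=
    Nat.sSup_mem (by exact ⟨_, p, hp, rfl⟩) (bddAbove_setOf_prod_degIn hacyc r v)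
  exact ⟨q, hq, heq.symm⟩

lemma one_le_pathMul_self [Finite V] (hacyc : ∀ x : V, ¬ Relation.TransGen E x x) :
    1 ≤ pathMul E r r :=
  prod_degIn_le_pathMul hacyc (singleton_mem_pathsFromTo r)

lemma pathMul_mul_degIn_le [Finite V] (hacyc : ∀ x : V, ¬ Relation.TransGen E x x)
    (hu : Relation.ReflTransGen E r u) (huv : E u v) :
    pathMul E r u * degIn E v ≤ pathMul E r v := by
  obtain ⟨p, hp, hprod⟩ := exists_prod_degIn_eq_pathMul hacyc hu
  have hne : p ≠ [] := by rintro rfl; simp [pathsFromTo] at hp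
  calc pathMul E r u * degIn E v = ((p ++ [v]).tail.map (degIn E)).prod := by
        rw [List.tail_append_of_ne_nil hne, List.map_append, List.prod_append, hprod]
        simp
    _ ≤ pathMul E r v := prod_degIn_le_pathMul hacyc (append_singleton_mem_pathsFromTo hp huv)

lemma degIn_eq_card [Fintype V] [DecidableRel E] (v : V) : degIn E v = #{u | E u v} := by
  rw [degIn, ← Set.ncard_coe_finset, coe_filter_univ]

lemma sum_pathMul_le_pathMul [Fintype V] [DecidableRel E]
    (hacyc : ∀ x : V, ¬ Relation.TransGen E x x) (hroot : ∀ x : V, Relation.ReflTransGen E r x)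
    (v : V) : ∑ u with E u v, pathMul E r u ≤ pathMul E r v :=
  calc ∑ u with E u v, pathMul E r u ≤ #{u | E u v} • (pathMul E r v / degIn E v) := by
        refine sum_le_card_nsmul _ _ _ fun u hu => ?_
        have huv : E u v := by simpa using hu
        have hpos : 0 < degIn E v := degIn_eq_card (E := E) v ▸ card_pos.mpr ⟨u, hu⟩
        exact (Nat.le_div_iff_mul_le hpos).mpr (pathMul_mul_degIn_le hacyc (hroot u) huv)
    _ ≤ pathMul E r v := by
        rw [smul_eq_mul, ← degIn_eq_card]
        exact Nat.mul_div_le _ _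

lemma pathWt_le_pathMul [Finite V] (hacyc : ∀ x : V, ¬ Relation.TransGen E x x)
    (hroot : ∀ x : V, Relation.ReflTransGen E r x) (v : V) : pathWt E r v ≤ pathMul E r v := by
  classical
  have := Fintype.ofFinite V
  induction v using (wellFounded_of_acyclic hacyc).induction with
  | _ v ih =>
    obtain rfl | hv := eq_or_ne v r
    · rw [pathWt_self fun u hu => hacyc v (Relation.TransGen.tail' (hroot u) hu)]
      exact one_le_pathMul_self hacyc
    · calc pathWt E r v ≤ ∑ u with E u v, pathWt E r u := pathWt_le_sum_pathWt hv
        _ ≤ ∑ u with E u v, pathMul E r u := sum_le_sum fun u hu => ih u (by simpa using hu)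
        _ ≤ pathMul E r v := sum_pathMul_le_pathMul hacyc hroot v

end

/-- If a finite rooted DAG `G` with root `r` has the `m`-path property
(i.e. `mul_G(v) ≤ m` for all vertices `v`), then `awt(G) ≤ amul(G) ≤ m · |V(G)|`. -/
theorem stmt1 {V : Type} [Fintype V] (E : V → V → Prop) (r : V)
    (hacyc : ∀ x : V, ¬ Relation.TransGen E x x)
    (hroot : ∀ x : V, Relation.ReflTransGen E r x)
    (m : ℕ) (hm : ∀ v : V, pathMul E r v ≤ m) :
    awt E r ≤ amul E r ∧ amul E r ≤ m * Fintype.card V :=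
  ⟨Finset.sum_le_sum fun v _ => pathWt_le_pathMul hacyc hroot v,
    (Finset.sum_le_card_nsmul _ _ m fun v _ => hm v).trans_eq (by simp [mul_comm])⟩
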